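/- arXiv:1312.4340 — 7 statements merged into one kernel-verified Lean document; each statement's English description precedes it below -/
import Mathlib

section
/- Let 𝓜 be the injection monoid, i.e. the monoid (under composition) of all injective self-maps of ℕ. Let W be an 𝓜-module (abelian group with 𝓜-action by group homomorphisms) that is tame, meaning every element of W has finite filtration: for each w ∈ W there exists n such that f·w = w for all f ∈ 𝓜 with f(i) = i for all i ≤ n. Then every element of 𝓜 acts injectively on W. -/
/-- The injection monoid `𝓜` of injective self-maps of `ℕ`, as a submonoid of
`Function.End ℕ`. -/
def InjM : Submonoid (Function.End ℕ) where
  carrier := {f | Function.Injective f}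
  one_mem' := fun _ _ h => h
  mul_mem' := fun hf hg => hf.comp hg

/-!
Given `f ∈ 𝓜` and `w` of filtration `≤ n`, extend the injection `f` restricted to `{0, …, n-1}`
to a permutation `σ` of `ℕ`. Then `σ⁻¹ ∈ 𝓜` and `σ⁻¹ * f` fixes `0, …, n-1`, so
`w = (σ⁻¹ * f) • w = σ⁻¹ • (f • w)`: the action of `f` has a left inverse on each element.
-/

theorem Set.Finite.exists_perm_eqOn {α : Type*} [Infinite α] {s : Set α} (hs : s.Finite)
    {f : α → α} (hf : s.InjOn f) : ∃ σ : Equiv.Perm α, s.EqOn σ f := by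
  have hcard : Cardinal.mk s < Cardinal.mk α :=
    (Cardinal.lt_aleph0_iff_set_finite.mpr hs).trans_le (Cardinal.aleph0_le_mk α)
  obtain ⟨σ, hσ⟩ :=
    Cardinal.extend_function_of_lt ⟨s.domRestrict f, hf.injective⟩ hcard ⟨Equiv.refl α⟩
  exact ⟨σ, fun x hx => hσ ⟨x, hx⟩⟩

theorem InjM.exists_mul_eqOn_id (f : InjM) (s : Set ℕ) (hs : s.Finite) :
    ∃ g : InjM, s.EqOn (g * f).1 id := by
  obtain ⟨σ, hσ⟩ := hs.exists_perm_eqOn f.2.injOn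
  refine ⟨⟨(σ.symm : ℕ → ℕ), σ.symm.injective⟩, fun i hi => ?_⟩
  change σ.symm (f.1 i) = i
  rw [← hσ hi, Equiv.symm_apply_apply]

/-- On a tame `𝓜`-module, every element of the injection monoid acts
injectively. -/
theorem stmt_7 {W : Type*} [AddCommGroup W] [DistribMulAction InjM W]
    (tame : ∀ w : W, ∃ n : ℕ, ∀ f : InjM,
      (∀ i < n, f.1 i = i) → f • w = w) :
    ∀ f : InjM, Function.Injective (fun w : W => f • w) := by
  intro f
  refine (injective_iff_map_eq_zero (DistribSMul.toAddMonoidHom W f)).mpr fun w hw => ?_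
  obtain ⟨n, hn⟩ := tame w
  obtain ⟨g, hg⟩ := InjM.exists_mul_eqOn_id f (Set.Iio n) (Set.finite_Iio n)
  calc w = (g * f) • w := (hn (g * f) fun i hi => hg hi).symm
    _ = 0 := by rw [mul_smul, show f • w = 0 from hw, smul_zero]
end

section
/- Let W be a tame 𝓜-module whose filtration is bounded, i.e. there exists n such that every element of W has filtration ≤ n. Then the 𝓜-action on W is trivial: f·w = w for all f ∈ 𝓜 and w ∈ W. -/
namespace InjM

def ofPerm : Equiv.Perm ℕ →* InjM where
  toFun σ := ⟨⇑σ, σ.injective⟩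
  map_one' := rfl
  map_mul' _ _ := rfl

variable {X : Type*} [MulAction InjM X]

def HasFiltrationLE (x : X) (n : ℕ) : Prop :=
  ∀ f : InjM, (∀ i < n, f.1 i = i) → f • x = x

lemma ofPerm_smul_ofPerm_inv_smul (σ : Equiv.Perm ℕ) (x : X) :
    ofPerm σ • ofPerm σ⁻¹ • x = x := by
  rw [← mul_smul, ← map_mul, mul_inv_cancel, map_one, one_smul]

lemma ofPerm_swap_smul {n : ℕ} (hn : ∀ x : X, HasFiltrationLE x n) (a b : ℕ) (x : X) :
    ofPerm (Equiv.swap a b) • x = x := by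
  rcases eq_or_ne a b with rfl | hab
  · rw [Equiv.swap_self, ← Equiv.Perm.one_def, map_one, one_smul]
  set c := n + a + b + 1
  set π := Equiv.swap a c * Equiv.swap b (c + 1)
  have hconj : Equiv.swap a b = π * Equiv.swap c (c + 1) * π⁻¹ := by
    rw [← Equiv.swap_apply_apply]
    congr 1
    · simp [π, Equiv.swap_apply_of_ne_of_ne, show c ≠ b by omega]
    · simp [π, Equiv.swap_apply_of_ne_of_ne, hab.symm, show b ≠ c by omega]
  have hfar : ∀ i < n, (ofPerm (Equiv.swap c (c + 1))).1 i = i := fun i hi =>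
    Equiv.swap_apply_of_ne_of_ne (by omega) (by omega)
  rw [hconj, map_mul, map_mul, mul_smul, mul_smul, hn _ _ hfar, ofPerm_smul_ofPerm_inv_smul]

lemma HasFiltrationLE.of_succ (hswap : ∀ (a b : ℕ) (x : X), ofPerm (Equiv.swap a b) • x = x)
    {x : X} {k : ℕ} (h : HasFiltrationLE x (k + 1)) : HasFiltrationLE x k := by
  intro f hf
  have hfix : ∀ i < k + 1, (ofPerm (Equiv.swap k (f.1 k)) * f).1 i = i := by
    intro i hi
    rcases Nat.lt_succ_iff_lt_or_eq.mp hi with hi | rfl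
    · have hne : f.1 i ≠ f.1 k := (f.2 : Function.Injective f.1).ne (by omega)
      rw [hf i hi] at hne
      show Equiv.swap k (f.1 k) (f.1 i) = i
      rw [hf i hi]
      exact Equiv.swap_apply_of_ne_of_ne (by omega) hne
    · exact Equiv.swap_apply_right _ _
  rw [← hswap k (f.1 k) (f • x), ← mul_smul]
  exact h _ hfix

lemma HasFiltrationLE.zero (hswap : ∀ (a b : ℕ) (x : X), ofPerm (Equiv.swap a b) • x = x)
    {x : X} {k : ℕ} (h : HasFiltrationLE x k) : HasFiltrationLE x 0 := by
  induction k with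
  | zero => exact h
  | succ k ih => exact ih (h.of_succ hswap)

end InjM

theorem stmt_8_general {W : Type*} [AddCommGroup W] [DistribMulAction InjM W]
    (bounded : ∃ n : ℕ, ∀ (w : W) (f : InjM),
      (∀ i < n, f.1 i = i) → f • w = w) :
    ∀ (f : InjM) (w : W), f • w = w := by
  obtain ⟨n, hn⟩ := bounded
  intro f w
  exact InjM.HasFiltrationLE.zero (InjM.ofPerm_swap_smul hn) (hn w) f
    (fun i hi => absurd hi i.not_lt_zero)

/-- A tame `𝓜`-module with bounded filtration is a trivial `𝓜`-module. -/
theorem stmt_8 {W : Type*} [AddCommGroup W] [DistribMulAction InjM W]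
    (tame : ∀ w : W, ∃ n : ℕ, ∀ f : InjM, (∀ i < n, f.1 i = i) → f • w = w)
    (bounded : ∃ n : ℕ, ∀ (w : W) (f : InjM),
      (∀ i < n, f.1 i = i) → f • w = w) :
    ∀ (f : InjM) (w : W), f • w = w :=
  stmt_8_general bounded
end

section
/- Let W be a tame 𝓜-module and let d ∈ 𝓜 be the cycle operator d(x) = x + 1. If d acts surjectively on W, then the 𝓜-action on W is trivial. -/
/-- The cycle operator `d ∈ 𝓜`, `d(x) = x + 1`. -/
def cycleOp : InjM :=
  ⟨fun x => x + 1, fun _ _ h => Nat.succ_injective h⟩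

open Filter Function

theorem cycleOp_pow_apply (N x : ℕ) : (cycleOp ^ N).1 x = x + N := by
  induction N with
  | zero => rfl
  | succ k ih => rw [pow_succ']; exact congrArg (· + 1) ih

theorem Function.Injective.exists_fixing_Iio_eventuallyEq {F : ℕ → ℕ} (hF : Injective F)
    (n : ℕ) : ∃ g : ℕ → ℕ, Injective g ∧ (∀ i < n, g i = i) ∧ g =ᶠ[atTop] F := by
  have hF_atTop : Tendsto F atTop atTop := Nat.cofinite_eq_atTop ▸ hF.tendsto_cofinite
  induction n with
  | zero => exact ⟨F, hF, by simp, .rfl⟩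
  | succ n ih =>
    obtain ⟨g, hg, hfix, htail⟩ := ih
    -- Swapping `n` with `g n` makes `n` a fixed point, and only moves the two values `n`, `g n`,
    -- which `F` eventually exceeds.
    refine ⟨Equiv.swap n (g n) ∘ g, (Equiv.injective _).comp hg, fun i hi => ?_, ?_⟩
    · rcases Nat.lt_succ_iff_lt_or_eq.1 hi with hi | rfl
      · have hgn : i ≠ g n := fun h => hi.ne (hg ((hfix i hi).trans h))
        simp [hfix i hi, Equiv.swap_apply_of_ne_of_ne hi.ne hgn]
      · simp
    · filter_upwards [htail, tendsto_atTop.1 hF_atTop (max n (g n) + 1)] with x hx hlarge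
      simp only [comp_apply, hx]
      exact Equiv.swap_apply_of_ne_of_ne (by omega) (by omega)

theorem smul_cycleOp_pow_smul_eq_of_eqOn_Ici {W : Type*} [MulAction InjM W] {f g : InjM} {N : ℕ}
    (hfg : Set.EqOn f.1 g.1 (Set.Ici N)) (v : W) :
    f • cycleOp ^ N • v = g • cycleOp ^ N • v := by
  rw [← mul_smul, ← mul_smul]
  congr 1
  refine Subtype.ext <| funext fun x => hfg ?_
  rw [Set.mem_Ici, cycleOp_pow_apply]
  omega

/-- If the cycle operator acts surjectively on a tame `𝓜`-module `W`, then
the `𝓜`-action on `W` is trivial. -/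
theorem stmt_9 {W : Type*} [AddCommGroup W] [DistribMulAction InjM W]
    (tame : ∀ w : W, ∃ n : ℕ, ∀ f : InjM, (∀ i < n, f.1 i = i) → f • w = w)
    (hsurj : Function.Surjective (fun w : W => cycleOp • w)) :
    ∀ (f : InjM) (w : W), f • w = w := by
  intro f w
  obtain ⟨n, hn⟩ := tame w
  obtain ⟨g, hg, hfix, htail⟩ := Injective.exists_fixing_Iio_eventuallyEq f.2 n
  obtain ⟨N, hN⟩ := eventually_atTop.1 htail
  obtain ⟨v, rfl⟩ : ∃ v, cycleOp ^ N • v = w := by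
    simpa only [smul_iterate] using hsurj.iterate N w
  calc f • cycleOp ^ N • v = ⟨g, hg⟩ • cycleOp ^ N • v :=
        smul_cycleOp_pow_smul_eq_of_eqOn_Ici (fun x hx => (hN x hx).symm) v
    _ = cycleOp ^ N • v := hn ⟨g, hg⟩ hfix
end

section
/- Let W be a tame 𝓜-module and n ∈ ℕ. Let W(n) denote the 𝓜-module with the same underlying group but with action restricted along the monoid homomorphism (n + −): 𝓜 → 𝓜 sending f to the map x ↦ x for x ≤ n and x ↦ n + f(x−n) for x > n. If the 𝓜-action on W(n) is trivial, then the 𝓜-action on W is trivial. -/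
/-- The shift `(n + −) : 𝓜 → 𝓜`, sending `f` to the map fixing the first `n`
natural numbers and acting by a shifted copy of `f` on the rest
(0-indexed). -/
def shiftInj (n : ℕ) (f : InjM) : InjM :=
  ⟨fun x => if x < n then x else n + f.1 (x - n), by
    intro a b h
    simp only at h
    have hfa := Nat.le_add_right n (f.1 (a - n))
    have hfb := Nat.le_add_right n (f.1 (b - n))
    split_ifs at h with h1 h2 h2
    · exact h
    · omega
    · omega
    · have : f.1 (a - n) = f.1 (b - n) := by omega
      have := f.2 this
      omega⟩

/-!
The shift of the transposition `(0 1)` is `(n n+1)`, so the permutations of `ℕ` acting trivially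
on `W` form a normal subgroup of `Perm ℕ` containing a transposition, hence all transpositions.
Given `f ∈ 𝓜` and `w ∈ W` fixed by every injection fixing `{0, …, m-1}` pointwise, choose a product
`σ` of transpositions agreeing with `f` below `m`; then `σ⁻¹ f` fixes `w`, so
`f • w = σ • w = w`.
-/

open Equiv

def permToInj : Perm ℕ →* InjM where
  toFun σ := ⟨⇑σ, σ.injective⟩
  map_one' := rfl
  map_mul' _ _ := rfl

def trivialPerms (W : Type*) [MulAction InjM W] : Subgroup (Perm ℕ) :=
  ((MulAction.toEndHom (M := InjM) (α := W)).comp permToInj).ker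

lemma trivialPerms_normal (W : Type*) [MulAction InjM W] : (trivialPerms W).Normal :=
  MonoidHom.normal_ker _

lemma mem_trivialPerms {W : Type*} [MulAction InjM W] {σ : Perm ℕ} :
    σ ∈ trivialPerms W ↔ ∀ w : W, permToInj σ • w = w :=
  MonoidHom.mem_ker.trans funext_iff

lemma Subgroup.Normal.swap_mem {α : Type*} [DecidableEq α] {H : Subgroup (Perm α)} (hH : H.Normal)
    {a b : α} (hab : a ≠ b) (h : swap a b ∈ H) (c d : α) : swap c d ∈ H := by
  rcases eq_or_ne c d with rfl | hcd
  · rw [swap_self, ← Perm.one_def]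
    exact H.one_mem
  obtain ⟨τ, hτ⟩ := isConj_iff.mp (Perm.isConj_swap hab hcd)
  exact hτ ▸ hH.conj_mem _ h τ

lemma shiftInj_swap_zero_one (n : ℕ) :
    shiftInj n (permToInj (swap 0 1)) = permToInj (swap n (n + 1)) := by
  refine Subtype.ext (funext fun x => ?_)
  change (if x < n then x else n + swap 0 1 (x - n)) = swap n (n + 1) x
  simp only [swap_apply_def]
  split_ifs <;> omega

def prefixPerm (f : ℕ → ℕ) : ℕ → Perm ℕ
  | 0 => 1
  | k + 1 => prefixPerm f k * swap k ((prefixPerm f k)⁻¹ (f k))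

lemma prefixPerm_apply_of_lt {f : ℕ → ℕ} (hf : Function.Injective f) {k i : ℕ} (hi : i < k) :
    prefixPerm f k i = f i := by
  induction k with
  | zero => omega
  | succ k ih =>
    rw [prefixPerm, Perm.mul_apply]
    rcases (Nat.lt_succ_iff.mp hi).eq_or_lt with rfl | hik
    · rw [swap_apply_left]
      exact Perm.eq_inv_iff_eq.mp rfl
    · have hik' : i ≠ (prefixPerm f k)⁻¹ (f k) := by
        rw [ne_eq, Perm.eq_inv_iff_eq, ih hik]
        exact hf.ne hik.ne
      rw [swap_apply_of_ne_of_ne hik.ne hik', ih hik]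

lemma prefixPerm_mem {H : Subgroup (Perm ℕ)} (hH : ∀ a b, swap a b ∈ H) (f : ℕ → ℕ) (k : ℕ) :
    prefixPerm f k ∈ H := by
  induction k with
  | zero => exact H.one_mem
  | succ k ih => exact H.mul_mem ih (hH _ _)

/-- If the `𝓜`-action on the shifted module `W(n)` (restriction along
`(n + −)`) is trivial and `W` is tame, then the `𝓜`-action on `W` is
trivial. -/
theorem stmt_11 {W : Type*} [AddCommGroup W] [DistribMulAction InjM W]
    (n : ℕ)
    (tame : ∀ w : W, ∃ m : ℕ, ∀ f : InjM, (∀ i < m, f.1 i = i) → f • w = w)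
    (htriv : ∀ (f : InjM) (w : W), shiftInj n f • w = w) :
    ∀ (f : InjM) (w : W), f • w = w := by
  have hswap : swap n (n + 1) ∈ trivialPerms W := by
    rw [mem_trivialPerms, ← shiftInj_swap_zero_one]
    exact htriv _
  have hswaps : ∀ a b, swap a b ∈ trivialPerms W :=
    (trivialPerms_normal W).swap_mem (by omega) hswap
  intro f w
  obtain ⟨m, hm⟩ := tame w
  set σ := prefixPerm f.1 m
  have hσ : ∀ v : W, permToInj σ • v = v := mem_trivialPerms.mp (prefixPerm_mem hswaps f.1 m)
  have hfix : ∀ i < m, (permToInj σ⁻¹ * f).1 i = i := fun i hi =>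
    (Perm.eq_inv_iff_eq.mpr (prefixPerm_apply_of_lt f.2 hi)).symm
  calc f • w = permToInj σ • (permToInj σ⁻¹ * f) • w := by
        rw [smul_smul, ← mul_assoc, ← map_mul, mul_inv_cancel, map_one, one_mul]
    _ = w := by rw [hm _ hfix, hσ]
end

section
/- Let M and N be rings, x ∈ M satisfying the Ore condition (for every x₁ ∈ M there is x₂ ∈ M with x₁x = xx₂), and let j : M → N be a ring homomorphism such that: (1) there exist y, y′ ∈ N with y·j(x) = 1 and j(x)·y′ = 1; (2) for every z ∈ N there exist p ∈ ℕ and u ∈ M with z·j(x)^p = j(u); (3) for all a, b ∈ M with j(a) = j(b) there is n ∈ ℕ with a·x^n = b·x^n. Then j(x) is a unit in N and j satisfies the universal property of the localization of M at x: every ring homomorphism φ : M → P with φ(x) a unit factors uniquely through j. -/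
/-!
By (2) every `z : N` is a right fraction `j u * j x ^ (-p)`, so an extension of `φ` along `j` can
only be `z ↦ φ u * φ x ^ (-p)`; condition (3) makes this independent of the chosen fraction.
Additivity follows by passing to a common denominator, and multiplicativity because the
iterated Ore condition `u' * x ^ p = x ^ p * u''` moves the denominator of `z₁` past the
numerator of `z₂`.
-/

theorem exists_mul_pow_eq_pow_mul {M : Type*} [Monoid M] {x : M}
    (ore : ∀ a : M, ∃ b : M, a * x = x * b) (a : M) (n : ℕ) :
    ∃ b : M, a * x ^ n = x ^ n * b := by
  induction n generalizing a with
  | zero => exact ⟨a, by simp⟩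
  | succ n ih =>
    obtain ⟨b, hb⟩ := ih a
    obtain ⟨c, hc⟩ := ore b
    exact ⟨c, by rw [pow_succ, ← mul_assoc, hb, mul_assoc, hc, ← mul_assoc]⟩

theorem Units.mul_val_pow_mul_val_zpow {P : Type*} [Monoid P] (a : P) (v : Pˣ) (m : ℕ)
    (k : ℤ) :
    a * ↑(v ^ m) * ↑(v ^ k) = a * ↑(v ^ (m + k)) := by
  rw [mul_assoc, ← Units.val_mul, ← zpow_natCast, ← zpow_add]

namespace LocalizationCriterion

variable {M N P : Type*} [Semiring M] [Semiring N] [Semiring P] {x : M} {j : M →+* N}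

theorem ext_of_comp_eq_of_isUnit (hfrac : ∀ z : N, ∃ (p : ℕ) (u : M), z * j x ^ p = j u)
    {ψ₁ ψ₂ : N →+* P} (hcomp : ψ₁.comp j = ψ₂.comp j) (hunit : IsUnit (ψ₁ (j x))) :
    ψ₁ = ψ₂ := by
  ext z
  obtain ⟨p, u, hu⟩ := hfrac z
  have hx : ψ₁ (j x) = ψ₂ (j x) := RingHom.congr_fun hcomp x
  apply (hunit.pow p).mul_left_injective
  calc ψ₁ z * ψ₁ (j x) ^ p = ψ₁ (j u) := by rw [← map_pow, ← map_mul, hu]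
    _ = ψ₂ (j u) := RingHom.congr_fun hcomp u
    _ = ψ₂ z * ψ₁ (j x) ^ p := by rw [hx, ← map_pow, ← map_mul, hu]

section Lift

variable (hfrac : ∀ z : N, ∃ (p : ℕ) (u : M), z * j x ^ p = j u) (φ : M →+* P)
  (hφ : IsUnit (φ x))

theorem mul_zpow_neg_eq_of_mul_pow_eq
    (hker : ∀ a b : M, j a = j b → ∃ n : ℕ, a * x ^ n = b * x ^ n)
    {z : N} {p q : ℕ} {u u' : M} (hu : z * j x ^ p = j u) (hu' : z * j x ^ q = j u') :
    φ u * ↑(hφ.unit ^ (-(p : ℤ))) = φ u' * ↑(hφ.unit ^ (-(q : ℤ))) := by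
  obtain ⟨n, hn⟩ : ∃ n : ℕ, u * x ^ q * x ^ n = u' * x ^ p * x ^ n := by
    refine hker _ _ ?_
    rw [map_mul, map_mul, map_pow, map_pow, ← hu, ← hu', mul_assoc, mul_assoc, ← pow_add,
      ← pow_add, add_comm]
  have hφn : φ u * ↑(hφ.unit ^ (q + n)) = φ u' * ↑(hφ.unit ^ (p + n)) := by
    simpa only [map_mul, map_pow, mul_assoc, ← pow_add, Units.val_pow_eq_pow_val,
      IsUnit.unit_spec] using congrArg φ hn
  calc φ u * ↑(hφ.unit ^ (-(p : ℤ)))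
      = φ u * ↑(hφ.unit ^ (q + n)) * ↑(hφ.unit ^ (-((p + q + n : ℕ) : ℤ))) := by
        rw [Units.mul_val_pow_mul_val_zpow]; congr 3; push_cast; ring
    _ = φ u' * ↑(hφ.unit ^ (p + n)) * ↑(hφ.unit ^ (-((p + q + n : ℕ) : ℤ))) := by
        rw [hφn]
    _ = φ u' * ↑(hφ.unit ^ (-(q : ℤ))) := by
        rw [Units.mul_val_pow_mul_val_zpow]; congr 3; push_cast; ring

theorem map_pow_eq_val_unit_pow (n : ℕ) : φ (x ^ n) = ↑(hφ.unit ^ n) := by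
  rw [map_pow, Units.val_pow_eq_pow_val, IsUnit.unit_spec]

noncomputable def liftFun (z : N) : P :=
  φ (hfrac z).choose_spec.choose * ↑(hφ.unit ^ (-((hfrac z).choose : ℤ)))

theorem liftFun_eq (hker : ∀ a b : M, j a = j b → ∃ n : ℕ, a * x ^ n = b * x ^ n)
    {z : N} {p : ℕ} {u : M} (hu : z * j x ^ p = j u) :
    liftFun hfrac φ hφ z = φ u * ↑(hφ.unit ^ (-(p : ℤ))) :=
  mul_zpow_neg_eq_of_mul_pow_eq φ hφ hker (hfrac z).choose_spec.choose_spec hu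

theorem liftFun_add (hker : ∀ a b : M, j a = j b → ∃ n : ℕ, a * x ^ n = b * x ^ n)
    (z₁ z₂ : N) :
    liftFun hfrac φ hφ (z₁ + z₂) = liftFun hfrac φ hφ z₁ + liftFun hfrac φ hφ z₂ := by
  obtain ⟨p, u, hu⟩ := hfrac z₁
  obtain ⟨q, u', hu'⟩ := hfrac z₂
  have hsum : (z₁ + z₂) * j x ^ (p + q) = j (u * x ^ q + u' * x ^ p) := by
    rw [map_add, map_mul, map_mul, map_pow, map_pow, ← hu, ← hu', add_mul, mul_assoc, mul_assoc,
      ← pow_add, ← pow_add, add_comm q p]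
  rw [liftFun_eq hfrac φ hφ hker hsum, liftFun_eq hfrac φ hφ hker hu,
    liftFun_eq hfrac φ hφ hker hu', map_add, add_mul, map_mul, map_mul,
    map_pow_eq_val_unit_pow φ hφ, map_pow_eq_val_unit_pow φ hφ, Units.mul_val_pow_mul_val_zpow,
    Units.mul_val_pow_mul_val_zpow]
  congr 4 <;> push_cast <;> ring

theorem liftFun_mul (ore : ∀ a : M, ∃ b : M, a * x = x * b)
    (hker : ∀ a b : M, j a = j b → ∃ n : ℕ, a * x ^ n = b * x ^ n) (z₁ z₂ : N) :
    liftFun hfrac φ hφ (z₁ * z₂) = liftFun hfrac φ hφ z₁ * liftFun hfrac φ hφ z₂ := by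
  obtain ⟨p, u, hu⟩ := hfrac z₁
  obtain ⟨q, u', hu'⟩ := hfrac z₂
  obtain ⟨u'', hu''⟩ := exists_mul_pow_eq_pow_mul ore u' p
  have hprod : z₁ * z₂ * j x ^ (q + p) = j (u * u'') :=
    calc z₁ * z₂ * j x ^ (q + p) = z₁ * (z₂ * j x ^ q) * j x ^ p := by
          simp only [pow_add, mul_assoc]
      _ = z₁ * j x ^ p * j u'' := by
          rw [hu', mul_assoc, ← map_pow, ← map_mul, hu'', map_mul, map_pow, mul_assoc]
      _ = j (u * u'') := by rw [hu, map_mul]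
  have hswap : ↑(hφ.unit ^ (-(p : ℤ))) * φ u' = φ u'' * ↑(hφ.unit ^ (-(p : ℤ))) := by
    have : SemiconjBy ↑(hφ.unit ^ p) (φ u'') (φ u') := by
      rw [SemiconjBy, ← map_pow_eq_val_unit_pow φ hφ, ← map_mul, ← map_mul, hu'']
    simpa only [SemiconjBy, zpow_neg, zpow_natCast] using this.units_inv_symm_left
  rw [liftFun_eq hfrac φ hφ hker hprod, liftFun_eq hfrac φ hφ hker hu,
    liftFun_eq hfrac φ hφ hker hu', mul_assoc (φ u), ← mul_assoc _ (φ u'), hswap, map_mul,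
    mul_assoc, mul_assoc, ← Units.val_mul, ← zpow_add]
  congr 4; push_cast; ring

noncomputable def lift (ore : ∀ a : M, ∃ b : M, a * x = x * b)
    (hker : ∀ a b : M, j a = j b → ∃ n : ℕ, a * x ^ n = b * x ^ n) : N →+* P where
  toFun := liftFun hfrac φ hφ
  map_one' := by rw [liftFun_eq hfrac φ hφ hker (p := 0) (u := 1) (by simp)]; simp
  map_zero' := by rw [liftFun_eq hfrac φ hφ hker (p := 0) (u := 0) (by simp)]; simp
  map_add' := liftFun_add hfrac φ hφ hker
  map_mul' := liftFun_mul hfrac φ hφ ore hker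

theorem lift_comp (ore : ∀ a : M, ∃ b : M, a * x = x * b)
    (hker : ∀ a b : M, j a = j b → ∃ n : ℕ, a * x ^ n = b * x ^ n) :
    (lift hfrac φ hφ ore hker).comp j = φ := by
  ext a
  change liftFun hfrac φ hφ (j a) = φ a
  rw [liftFun_eq hfrac φ hφ hker (p := 0) (u := a) (by simp)]
  simp

end Lift

end LocalizationCriterion

open LocalizationCriterion in
/-- Criterion for a ring homomorphism to be a localization at a central-type
element `x` satisfying the Ore condition: under conditions (1)–(3), `j(x)` is
a unit in `N` and `j` is initial among homomorphisms out of `M` inverting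
`x`. -/
theorem stmt_13 {M N : Type} [Ring M] [Ring N] (x : M) (j : M →+* N)
    (ore : ∀ x₁ : M, ∃ x₂ : M, x₁ * x = x * x₂)
    (h1 : ∃ y y' : N, y * j x = 1 ∧ j x * y' = 1)
    (h2 : ∀ z : N, ∃ (p : ℕ) (u : M), z * (j x) ^ p = j u)
    (h3 : ∀ a b : M, j a = j b → ∃ n : ℕ, a * x ^ n = b * x ^ n) :
    IsUnit (j x) ∧
      ∀ (P : Type) [Ring P] (φ : M →+* P), IsUnit (φ x) →
        ∃! ψ : N →+* P, ψ.comp j = φ := by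
  obtain ⟨y, y', hy, hy'⟩ := h1
  have hunit : IsUnit (j x) := isUnit_iff_exists_and_exists.mpr ⟨⟨y', hy'⟩, ⟨y, hy⟩⟩
  refine ⟨hunit, fun P _ φ hφ => ?_⟩
  have hlift := lift_comp h2 φ hφ ore h3
  refine ⟨lift h2 φ hφ ore h3, hlift,
    fun ψ hψ => ext_of_comp_eq_of_isUnit h2 (hψ.trans hlift.symm) ?_⟩
  rwa [← RingHom.comp_apply, hψ]
end

section
/- Let A₀, A₁ ∈ GL_n(ℤ) with A₁·A₀⁻¹ ∈ SL_n(ℤ). Then there exists a matrix Ã ∈ GL_n(ℤ[T]) (an invertible matrix over the polynomial ring ℤ[T]) such that evaluating T at 0 gives A₀ and evaluating T at 1 gives A₁. -/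
/-!
`SL_n(ℤ)` is generated by the transvections `1 + c E_{ij}`: Euclid's algorithm, run on a column
by transvections, turns any unimodular vector into a standard basis vector, and a matrix of
`SL_{n+1}(ℤ)` fixing the last basis vector is `diag(A, 1)` times a lower unipotent matrix, with
`A ∈ SL_n(ℤ)`; so induction on `n` applies. The matrices `B` for which some `P ∈ GL_n(R[X])` has
`P(0) = 1` and `P(1) = B` form a subgroup, the image under `T ↦ 1` of the kernel of `T ↦ 0`,
and it contains each transvection `1 + c E_{ij}` as the value of `1 + cT E_{ij}`. Hence
`B = A₁ A₀⁻¹` has such a `P`, and `P A₀` is the required matrix.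
-/

open Polynomial

open Matrix Sum

namespace Matrix

theorem transvection_map {n R S : Type*} [DecidableEq n] [CommRing R] [CommRing S]
    (f : R →+* S) (i j : n) (c : R) :
    (transvection i j c).map f = transvection i j (f c) := by
  ext a b
  simp [transvection, one_apply, single_apply, apply_ite f]

namespace SpecialLinearGroup

variable {ι κ R : Type*} [Fintype ι] [DecidableEq ι] [Fintype κ] [DecidableEq κ] [CommRing R]

variable (ι R) in
def elementarySubgroup : Subgroup (SpecialLinearGroup ι R) :=
  Subgroup.closure (Set.range TransvectionStruct.toSpecialLinearGroup)

theorem transvection_mem_elementarySubgroup {i j : ι} (hij : i ≠ j) (c : R) :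
    transvection hij c ∈ elementarySubgroup ι R :=
  Subgroup.subset_closure ⟨⟨i, j, hij, c⟩, rfl⟩

theorem transvection_smul {i j : ι} (hij : i ≠ j) (c : R) (v : ι → R) :
    transvection hij c • v = Function.update v i (v i + c * v j) := by
  ext k
  rcases eq_or_ne k i with rfl | hk
  · simp [SpecialLinearGroup.smul_def, transvection_coe, add_mulVec, single_mulVec]
  · simp [SpecialLinearGroup.smul_def, transvection_coe, add_mulVec, single_mulVec, hk]

theorem exists_mem_elementarySubgroup_smul_eq_single [Nonempty ι] (v : ι → ℤ) :
    ∃ g ∈ elementarySubgroup ι ℤ, ∃ k c, g • v = Pi.single k c := by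
  -- Euclid: reducing the larger of two nonzero entries modulo the smaller one decreases `∑ |vᵢ|`.
  induction h : ∑ i, (v i).natAbs using Nat.strong_induction_on generalizing v with
  | _ N ih =>
  by_cases hv : ∃ i k, i ≠ k ∧ v i ≠ 0 ∧ v k ≠ 0
  · obtain ⟨i, k, hik, hvk, hle⟩ :
        ∃ i k, i ≠ k ∧ v k ≠ 0 ∧ (v k).natAbs ≤ (v i).natAbs := by
      obtain ⟨i, k, hik, hvi, hvk⟩ := hv
      rcases le_total (v k).natAbs (v i).natAbs with hle | hle
      exacts [⟨i, k, hik, hvk, hle⟩, ⟨k, i, hik.symm, hvi, hle⟩]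
    have hg₀ : transvection hik (-(v i / v k)) • v = Function.update v i (v i % v k) := by
      rw [transvection_smul, Int.emod_def]; ring_nf
    have hlt : ∑ a, (Function.update v i (v i % v k) a).natAbs < N := by
      rw [← h]
      refine Finset.sum_lt_sum (fun a _ => ?_) ⟨i, Finset.mem_univ _, ?_⟩
      · rcases eq_or_ne a i with rfl | ha
        · simpa using ((EuclideanDomain.mod_lt (v a) hvk).trans_le hle).le
        · simp [ha]
      · simpa using (EuclideanDomain.mod_lt (v i) hvk).trans_le hle
    obtain ⟨g, hg, k', c, hgv⟩ := ih _ hlt _ rfl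
    exact ⟨g * transvection hik (-(v i / v k)),
      mul_mem hg (transvection_mem_elementarySubgroup _ _), k', c, by rw [mul_smul, hg₀, hgv]⟩
  · push Not at hv
    refine ⟨1, one_mem _, ?_⟩
    by_cases h0 : ∃ k, v k ≠ 0
    · obtain ⟨k, hk⟩ := h0
      refine ⟨k, v k, funext fun i => ?_⟩
      rcases eq_or_ne i k with rfl | hi
      · simp
      · simpa [hi] using not_not.1 (mt (hv i k hi) hk)
    · push Not at h0
      exact ⟨Classical.arbitrary ι, 0, by ext; simp [h0]⟩

theorem exists_mem_elementarySubgroup_smul_single_eq_single_one [Nontrivial ι] {u : R}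
    (hu : IsUnit u) (k j : ι) :
    ∃ g ∈ elementarySubgroup ι R, g • (Pi.single k u : ι → R) = Pi.single j 1 := by
  have key : ∀ {u : R}, IsUnit u → ∀ {k j : ι}, k ≠ j →
      ∃ g ∈ elementarySubgroup ι R, g • (Pi.single k u : ι → R) = Pi.single j 1 := by
    intro u hu k j hkj
    -- `u eₖ ↦ u eₖ + eⱼ ↦ eⱼ`
    refine ⟨transvection hkj (-u) * transvection hkj.symm (↑hu.unit⁻¹),
      mul_mem (transvection_mem_elementarySubgroup _ _) (transvection_mem_elementarySubgroup _ _),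
      ?_⟩
    ext a
    simp only [mul_smul, transvection_smul, Function.update_apply, Pi.single_apply]
    split_ifs <;> simp_all
  rcases eq_or_ne k j with rfl | hkj
  · obtain ⟨k', hk'⟩ := exists_ne k
    obtain ⟨g₁, hg₁, h₁⟩ := key hu hk'.symm
    obtain ⟨g₂, hg₂, h₂⟩ := key isUnit_one hk'
    exact ⟨g₂ * g₁, mul_mem hg₂ hg₁, by rw [mul_smul, h₁, h₂]⟩
  · exact key hu hkj

theorem exists_dotProduct_smul_eq_one {v : ι → R} (hv : ∃ w, w ⬝ᵥ v = 1)
    (g : SpecialLinearGroup ι R) : ∃ w, w ⬝ᵥ (g • v) = 1 := by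
  obtain ⟨w, hw⟩ := hv
  refine ⟨w ᵥ* ↑g⁻¹, ?_⟩
  rw [← dotProduct_mulVec, ← smul_eq_mulVec, ← SpecialLinearGroup.smul_def, inv_smul_smul, hw]

theorem exists_mem_elementarySubgroup_smul_eq_single_one [Nontrivial ι] {v : ι → ℤ}
    (hv : ∃ w, w ⬝ᵥ v = 1) (j : ι) :
    ∃ g ∈ elementarySubgroup ι ℤ, g • v = Pi.single j 1 := by
  obtain ⟨g, hg, k, c, hgv⟩ := exists_mem_elementarySubgroup_smul_eq_single v
  obtain ⟨w, hw⟩ := exists_dotProduct_smul_eq_one hv g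
  rw [hgv, dotProduct_single] at hw
  obtain ⟨g', hg', hg'v⟩ :=
    exists_mem_elementarySubgroup_smul_single_eq_single_one (.of_mul_eq_one_right _ hw) k j
  exact ⟨g' * g, mul_mem hg' hg, by rw [mul_smul, hgv, hg'v]⟩

section Blocks

variable {p : Type*} [Fintype p] [DecidableEq p]

variable (p) in
def sumInl : SpecialLinearGroup ι R →* SpecialLinearGroup (ι ⊕ p) R where
  toFun A := ⟨fromBlocks A 0 0 1, by simp⟩
  map_one' := Subtype.ext fromBlocks_one
  map_mul' A B := Subtype.ext <| show _ = fromBlocks _ _ _ _ * fromBlocks _ _ _ _ by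
    simp [fromBlocks_multiply]

theorem sumInl_mem_elementarySubgroup {A : SpecialLinearGroup ι R}
    (hA : A ∈ elementarySubgroup ι R) : sumInl p A ∈ elementarySubgroup (ι ⊕ p) R := by
  suffices (elementarySubgroup ι R).map (sumInl p) ≤ elementarySubgroup (ι ⊕ p) R from
    this ⟨A, hA, rfl⟩
  rw [elementarySubgroup, MonoidHom.map_closure, ← Set.range_comp]
  exact Subgroup.closure_mono <| Set.range_subset_iff.2 fun t =>
    ⟨t.sumInl p, Subtype.ext (t.toMatrix_sumInl p)⟩

def lowerUnipotent (w : Matrix p ι R) : SpecialLinearGroup (ι ⊕ p) R :=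
  ⟨fromBlocks 1 0 w 1, by simp⟩

theorem lowerUnipotent_zero : lowerUnipotent (0 : Matrix p ι R) = 1 :=
  Subtype.ext fromBlocks_one

theorem lowerUnipotent_add (w w' : Matrix p ι R) :
    lowerUnipotent (w + w') = lowerUnipotent w * lowerUnipotent w' :=
  Subtype.ext <| show _ = fromBlocks _ _ _ _ * fromBlocks _ _ _ _ by
    simp [lowerUnipotent, fromBlocks_multiply, add_comm]

theorem lowerUnipotent_single (a : p) (i : ι) (c : R) :
    lowerUnipotent (single a i c) = transvection (inr_ne_inl : (inr a : ι ⊕ p) ≠ inl i) c := by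
  ext (k | k) (l | l) <;> simp [lowerUnipotent, transvection_coe, one_apply, single_apply]

theorem lowerUnipotent_mem_elementarySubgroup (w : Matrix p ι R) :
    lowerUnipotent w ∈ elementarySubgroup (ι ⊕ p) R := by
  have hadd : ∀ w w' : Matrix p ι R, lowerUnipotent w ∈ elementarySubgroup (ι ⊕ p) R →
      lowerUnipotent w' ∈ elementarySubgroup (ι ⊕ p) R →
      lowerUnipotent (w + w') ∈ elementarySubgroup (ι ⊕ p) R := fun w w' hw hw' => by
    rw [lowerUnipotent_add]; exact mul_mem hw hw'
  have hzero : lowerUnipotent (0 : Matrix p ι R) ∈ elementarySubgroup (ι ⊕ p) R := by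
    rw [lowerUnipotent_zero]; exact one_mem _
  rw [matrix_eq_sum_single w]
  refine Finset.sum_induction _ _ hadd hzero fun a _ => Finset.sum_induction _ _ hadd hzero
    fun i _ => ?_
  rw [lowerUnipotent_single]
  exact transvection_mem_elementarySubgroup _ _

theorem eq_sumInl_mul_lowerUnipotent {M : SpecialLinearGroup (ι ⊕ Unit) R}
    (hM : M • (Pi.single (inr ()) 1 : ι ⊕ Unit → R) = Pi.single (inr ()) 1) :
    ∃ A : SpecialLinearGroup ι R,
      M = sumInl Unit A * lowerUnipotent (toBlocks₂₁ (M : Matrix (ι ⊕ Unit) (ι ⊕ Unit) R)) := by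
  set N : Matrix (ι ⊕ Unit) (ι ⊕ Unit) R := ↑M with hN
  have hcol : ∀ k, N k (inr ()) = (Pi.single (inr ()) 1 : ι ⊕ Unit → R) k := fun k => by
    simpa [SpecialLinearGroup.smul_def] using congrFun hM k
  have hblocks : N = fromBlocks (toBlocks₁₁ N) 0 (toBlocks₂₁ N) 1 := by
    conv_lhs => rw [← fromBlocks_toBlocks N]
    congr 1 <;> ext i j
    · simpa [toBlocks₁₂] using hcol (inl i)
    · simpa [toBlocks₂₂] using hcol (inr i)
  have hdet : (toBlocks₁₁ N).det = 1 := by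
    have h := M.2
    rwa [← hN, hblocks, det_fromBlocks_zero₁₂, det_one, mul_one] at h
  refine ⟨⟨_, hdet⟩, Subtype.ext ?_⟩
  conv_lhs => rw [← hN, hblocks]
  show _ = fromBlocks _ _ _ _ * fromBlocks _ _ _ _
  simp [fromBlocks_multiply]

end Blocks

theorem elementarySubgroup_sum_unit_eq_top [Nonempty ι] (h : elementarySubgroup ι ℤ = ⊤) :
    elementarySubgroup (ι ⊕ Unit) ℤ = ⊤ := by
  have : Nontrivial (ι ⊕ Unit) := ⟨inl (Classical.arbitrary ι), inr (), Sum.inl_ne_inr⟩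
  refine eq_top_iff.2 fun M _ => ?_
  have hcol : ∃ w, w ⬝ᵥ (M • (Pi.single (inr ()) 1 : ι ⊕ Unit → ℤ)) = 1 :=
    exists_dotProduct_smul_eq_one ⟨Pi.single (inr ()) 1, by simp⟩ M
  obtain ⟨g, hg, hgM⟩ := exists_mem_elementarySubgroup_smul_eq_single_one hcol (inr ())
  obtain ⟨A, hA⟩ := eq_sumInl_mul_lowerUnipotent (M := g * M) (by rw [mul_smul, hgM])
  have hgM_mem : g * M ∈ elementarySubgroup (ι ⊕ Unit) ℤ := hA ▸
    mul_mem (sumInl_mem_elementarySubgroup (h ▸ Subgroup.mem_top A))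
      (lowerUnipotent_mem_elementarySubgroup _)
  simpa using mul_mem (inv_mem hg) hgM_mem

def reindex (e : ι ≃ κ) : SpecialLinearGroup ι R →* SpecialLinearGroup κ R where
  toFun A := ⟨Matrix.reindex e e A, by rw [det_reindex_self, A.2]⟩
  map_one' := Subtype.ext (by simp)
  map_mul' A B := Subtype.ext <| show _ = Matrix.reindex e e _ * Matrix.reindex e e _ by
    simp [submatrix_mul_equiv]

@[simp]
theorem coe_reindex (e : ι ≃ κ) (A : SpecialLinearGroup ι R) :
    (reindex e A : Matrix κ κ R) = Matrix.reindex e e A :=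
  rfl

theorem elementarySubgroup_eq_top_of_equiv (e : ι ≃ κ) (h : elementarySubgroup ι R = ⊤) :
    elementarySubgroup κ R = ⊤ := by
  have hmap : (elementarySubgroup ι R).map (reindex e) ≤ elementarySubgroup κ R := by
    rw [elementarySubgroup, MonoidHom.map_closure, ← Set.range_comp]
    exact Subgroup.closure_mono <| Set.range_subset_iff.2 fun t =>
      ⟨t.reindexEquiv e, Subtype.ext (t.toMatrix_reindexEquiv e)⟩
  refine eq_top_iff.2 fun M _ => ?_
  have hM : M = reindex e (reindex e.symm M) := Subtype.ext <| by
    ext; simp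
  exact hM ▸ hmap ⟨_, h ▸ Subgroup.mem_top _, rfl⟩

variable (ι) in
theorem elementarySubgroup_int_eq_top : elementarySubgroup ι ℤ = ⊤ := by
  refine Finite.induction_subsingleton_or_nontrivial
    (P := fun ι => ∀ [Fintype ι] [DecidableEq ι], elementarySubgroup ι ℤ = ⊤) ι ?_ ?_
  · intro ι _ _ _ _
    exact eq_top_iff.2 fun M _ => Subsingleton.elim M 1 ▸ one_mem _
  · intro ι _ _ ih _ _
    obtain ⟨j⟩ := ‹Nontrivial ι›.to_nonempty
    have : Nonempty {i // i ≠ j} := let ⟨k, hk⟩ := exists_ne j; ⟨⟨k, hk⟩⟩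
    exact elementarySubgroup_eq_top_of_equiv
      ((Equiv.optionEquivSumPUnit _).symm.trans (Equiv.optionSubtypeNe j))
      (elementarySubgroup_sum_unit_eq_top (ih _ (Finite.card_subtype_lt (x := j) (by simp))))

theorem units_map_toGL_transvection {S : Type*} [CommRing S] (f : R →+* S) {i j : ι}
    (hij : i ≠ j) (c : R) :
    Units.map f.mapMatrix.toMonoidHom (toGL (transvection hij c)) =
      toGL (transvection hij (f c)) :=
  Units.ext (transvection_map f i j c)

theorem exists_eval_zero_eq_one_and_eval_one_eq_of_mem_elementarySubgroup
    {B : SpecialLinearGroup ι R} (hB : B ∈ elementarySubgroup ι R) :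
    ∃ P : GL ι R[X], Units.map (evalRingHom 0).mapMatrix.toMonoidHom P = 1 ∧
      Units.map (evalRingHom 1).mapMatrix.toMonoidHom P = toGL B := by
  have hgen : elementarySubgroup ι R ≤
      (((Units.map (evalRingHom 0).mapMatrix.toMonoidHom).ker.map
        (Units.map (evalRingHom (1 : R)).mapMatrix.toMonoidHom)).comap toGL) := by
    refine Subgroup.closure_le _ |>.2 ?_
    rintro _ ⟨⟨i, j, hij, c⟩, rfl⟩
    refine ⟨toGL (transvection hij (C c * X)), ?_, ?_⟩
    · rw [SetLike.mem_coe, MonoidHom.mem_ker, units_map_toGL_transvection]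
      simp
    · rw [units_map_toGL_transvection]
      simp
  exact hgen hB

end SpecialLinearGroup
end Matrix

/-- If `A₀, A₁ ∈ GL_n(ℤ)` with `A₁ A₀⁻¹ ∈ SL_n(ℤ)`, then there is a matrix
`Atilde ∈ GL_n(ℤ[T])` with `Atilde(0) = A₀` and `Atilde(1) = A₁`. -/
theorem stmt_15 (n : ℕ) (A₀ A₁ : (Matrix (Fin n) (Fin n) ℤ)ˣ)
    (h : ((A₁ * A₀⁻¹ : (Matrix (Fin n) (Fin n) ℤ)ˣ) :
      Matrix (Fin n) (Fin n) ℤ).det = 1) :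
    ∃ Atilde : (Matrix (Fin n) (Fin n) ℤ[X])ˣ,
      Units.map ((Polynomial.evalRingHom (0 : ℤ)).mapMatrix.toMonoidHom) Atilde = A₀ ∧
      Units.map ((Polynomial.evalRingHom (1 : ℤ)).mapMatrix.toMonoidHom) Atilde = A₁ := by
  obtain ⟨P, hP₀, hP₁⟩ :=
    SpecialLinearGroup.exists_eval_zero_eq_one_and_eval_one_eq_of_mem_elementarySubgroup
      (B := ⟨_, h⟩) (by rw [SpecialLinearGroup.elementarySubgroup_int_eq_top]; trivial)
  have hC : ∀ a : ℤ, Units.map (evalRingHom a).mapMatrix.toMonoidHom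
      (Units.map (C : ℤ →+* ℤ[X]).mapMatrix.toMonoidHom A₀) = A₀ := fun a => by
    ext; simp
  refine ⟨P * Units.map (C : ℤ →+* ℤ[X]).mapMatrix.toMonoidHom A₀, ?_, ?_⟩
  · rw [map_mul, hP₀, hC, one_mul]
  · rw [map_mul, hP₁, hC,
    show SpecialLinearGroup.toGL ⟨_, h⟩ = A₁ * A₀⁻¹ from Units.ext rfl, inv_mul_cancel_right]
end

section
/- Let 𝓓 be a category, 𝓕 a class of functors from 𝓓 to 𝓜-sets, and 𝓒 ⊆ 𝓓 the full subcategory of objects X such that 𝓜 acts trivially on F(X) for all F ∈ 𝓕. For F ∈ 𝓕 and X ∈ 𝓓, let F̃(X) be the set of natural transformations (of functors 𝓒 → Set) from 𝓓(X,−)|_𝓒 to F|_𝓒, with 𝓜-action (w·g)(k) := w·(g(k)). Then: (a) 𝓜 acts trivially on F̃(X); (b) the map c_X : F(X) → F̃(X), x ↦ (k ↦ F(k)(x)), is a natural map of 𝓜-sets; (c) X belongs to 𝓒 if and only if c_X is bijective, and also if and only if c_X is injective. -/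
open CategoryTheory

universe u v w

variable {D : Type u} [Category.{v} D] {ι : Type*}

/-- An object `X` of `𝓓` lies in the full subcategory `𝓒` iff the `𝓜`-action
on `F(X)` is trivial for every `F` in the class `𝓕` (indexed by `ι`). -/
def Good (Fs : ι → D ⥤ Type w)
    (act : ∀ (i : ι) (X : D), InjM → (Fs i).obj X → (Fs i).obj X)
    (X : D) : Prop :=
  ∀ (i : ι) (f : InjM) (x : (Fs i).obj X), act i X f x = x

/-- `F̃(X)`: the set of natural transformations of functors `𝓒 → Set` from
`𝓓(X,−)|_𝓒` to `F|_𝓒`, modelled concretely as compatible families. -/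
def Tilde (Fs : ι → D ⥤ Type w)
    (act : ∀ (i : ι) (X : D), InjM → (Fs i).obj X → (Fs i).obj X)
    (i : ι) (X : D) : Type (max u v w) :=
  { g : ∀ (Y : D), Good Fs act Y → (X ⟶ Y) → (Fs i).obj Y //
    ∀ (Y Z : D) (hY : Good Fs act Y) (hZ : Good Fs act Z)
      (k : X ⟶ Y) (m : Y ⟶ Z),
      (Fs i).map m (g Y hY k) = g Z hZ (k ≫ m) }

/-- The `𝓜`-action on `F̃(X)`, `(w·g)(k) = w·(g(k))`. -/
def actTilde (Fs : ι → D ⥤ Type w)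
    (act : ∀ (i : ι) (X : D), InjM → (Fs i).obj X → (Fs i).obj X)
    (i : ι) (X : D) (f : InjM) (g : Tilde Fs act i X) : Tilde Fs act i X :=
  ⟨fun Y hY k => act i Y f (g.1 Y hY k), by
    intro Y Z hY hZ k m
    simp only []
    rw [hY i f, hZ i f]
    exact g.2 Y Z hY hZ k m⟩

/-- The tautological map `c_X : F(X) → F̃(X)`, `x ↦ (k ↦ F(k)(x))`. -/
def cMap (Fs : ι → D ⥤ Type w)
    (act : ∀ (i : ι) (X : D), InjM → (Fs i).obj X → (Fs i).obj X)
    (i : ι) (X : D) (x : (Fs i).obj X) : Tilde Fs act i X :=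
  ⟨fun Y _ k => (Fs i).map k x, by
    intro Y Z hY hZ k m
    exact (FunctorToTypes.map_comp_apply (Fs i) k m x).symm⟩

/-! Since `𝓒` consists of objects on which `𝓜` acts trivially, so does `F̃(X)`, and `c_X` is
equivariant. Hence injectivity of `c_X` forces the action on `F(X)` to be trivial, while for
`X ∈ 𝓒` the Yoneda argument inverts `c_X` by evaluating a family at `𝟙 X`. -/

section Representability

variable {Fs : ι → D ⥤ Type w}
  {act : ∀ (i : ι) (X : D), InjM → (Fs i).obj X → (Fs i).obj X}

theorem actTilde_eq_self (i : ι) (X : D) (f : InjM) (g : Tilde Fs act i X) :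
    actTilde Fs act i X f g = g :=
  Subtype.ext <| funext fun Y => funext fun hY => funext fun k => hY i f (g.1 Y hY k)

theorem cMap_map_apply (i : ι) {X Y : D} (h : X ⟶ Y) (x : (Fs i).obj X) (Z : D)
    (hZ : Good Fs act Z) (k : Y ⟶ Z) :
    (cMap Fs act i Y ((Fs i).map h x)).1 Z hZ k = (cMap Fs act i X x).1 Z hZ (h ≫ k) :=
  (Functor.map_comp_apply (Fs i) h k x).symm

theorem cMap_act
    (hnat : ∀ (i : ι) {X Y : D} (k : X ⟶ Y) (f : InjM) (x : (Fs i).obj X),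
      (Fs i).map k (act i X f x) = act i Y f ((Fs i).map k x))
    (i : ι) (X : D) (f : InjM) (x : (Fs i).obj X) :
    cMap Fs act i X (act i X f x) = actTilde Fs act i X f (cMap Fs act i X x) :=
  Subtype.ext <| funext fun _ => funext fun _ => funext fun k => hnat i k f x

theorem cMap_bijective_of_good {X : D} (hX : Good Fs act X) (i : ι) :
    Function.Bijective (cMap Fs act i X) := by
  refine ⟨fun x y hxy => ?_, fun g => ⟨g.1 X hX (𝟙 X), ?_⟩⟩
  · simpa [cMap] using congrFun (congrFun (congrFun (congrArg Subtype.val hxy) X) hX) (𝟙 X)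
  · refine Subtype.ext <| funext fun Y => funext fun hY => funext fun k => ?_
    simpa [cMap] using g.2 X Y hX hY (𝟙 X) k

theorem good_of_cMap_injective
    (hnat : ∀ (i : ι) {X Y : D} (k : X ⟶ Y) (f : InjM) (x : (Fs i).obj X),
      (Fs i).map k (act i X f x) = act i Y f ((Fs i).map k x))
    {X : D} (h : ∀ i, Function.Injective (cMap Fs act i X)) : Good Fs act X := fun i f x =>
  h i <| by rw [cMap_act hnat, actTilde_eq_self]

end Representability

theorem stmt_18_general (Fs : ι → D ⥤ Type w)
    (act : ∀ (i : ι) (X : D), InjM → (Fs i).obj X → (Fs i).obj X)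
    (hnat : ∀ (i : ι) {X Y : D} (k : X ⟶ Y) (f : InjM) (x : (Fs i).obj X),
      (Fs i).map k (act i X f x) = act i Y f ((Fs i).map k x)) :
    (∀ (i : ι) (X : D) (f : InjM) (g : Tilde Fs act i X),
      actTilde Fs act i X f g = g) ∧
    (∀ (i : ι) {X Y : D} (h : X ⟶ Y) (x : (Fs i).obj X) (Z : D)
      (hZ : Good Fs act Z) (k : Y ⟶ Z),
      (cMap Fs act i Y ((Fs i).map h x)).1 Z hZ k =
        (cMap Fs act i X x).1 Z hZ (h ≫ k)) ∧
    (∀ (i : ι) (X : D) (f : InjM) (x : (Fs i).obj X),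
      cMap Fs act i X (act i X f x) =
        actTilde Fs act i X f (cMap Fs act i X x)) ∧
    (∀ X : D,
      (Good Fs act X ↔ ∀ i : ι, Function.Bijective (cMap Fs act i X)) ∧
      (Good Fs act X ↔ ∀ i : ι, Function.Injective (cMap Fs act i X))) :=
  ⟨actTilde_eq_self, cMap_map_apply, cMap_act hnat, fun _ =>
    ⟨⟨cMap_bijective_of_good, fun h => good_of_cMap_injective hnat fun i => (h i).1⟩,
      ⟨fun hX i => (cMap_bijective_of_good hX i).1, good_of_cMap_injective hnat⟩⟩⟩

/-- (a) `𝓜` acts trivially on `F̃(X)`; (b) `c_X` is a natural map of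
`𝓜`-sets; (c) `X ∈ 𝓒` iff all the maps `c_X` are bijective, and also iff
they are all injective. -/
theorem stmt_18 (Fs : ι → D ⥤ Type w)
    (act : ∀ (i : ι) (X : D), InjM → (Fs i).obj X → (Fs i).obj X)
    (hone : ∀ (i : ι) (X : D) (x : (Fs i).obj X), act i X 1 x = x)
    (hmul : ∀ (i : ι) (X : D) (f g : InjM) (x : (Fs i).obj X),
      act i X (f * g) x = act i X f (act i X g x))
    (hnat : ∀ (i : ι) {X Y : D} (k : X ⟶ Y) (f : InjM) (x : (Fs i).obj X),
      (Fs i).map k (act i X f x) = act i Y f ((Fs i).map k x)) :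
    (∀ (i : ι) (X : D) (f : InjM) (g : Tilde Fs act i X),
      actTilde Fs act i X f g = g) ∧
    (∀ (i : ι) {X Y : D} (h : X ⟶ Y) (x : (Fs i).obj X) (Z : D)
      (hZ : Good Fs act Z) (k : Y ⟶ Z),
      (cMap Fs act i Y ((Fs i).map h x)).1 Z hZ k =
        (cMap Fs act i X x).1 Z hZ (h ≫ k)) ∧
    (∀ (i : ι) (X : D) (f : InjM) (x : (Fs i).obj X),
      cMap Fs act i X (act i X f x) =
        actTilde Fs act i X f (cMap Fs act i X x)) ∧
    (∀ X : D,
      (Good Fs act X ↔ ∀ i : ι, Function.Bijective (cMap Fs act i X)) ∧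
      (Good Fs act X ↔ ∀ i : ι, Function.Injective (cMap Fs act i X))) :=
  stmt_18_general Fs act hnat
end
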